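/- Let n ≥ 3 and let G be the graph consisting of a vertex v joined to all vertices of a complete bipartite graph with parts V_1, V_2 of sizes floor((n-1)/2) and ceil((n-1)/2). Let \vec{B} be the orientation of the bowtie in which one triangle has both non-shared edges entering the center and the other triangle has both non-shared edges exiting the center. Then the number of \vec{B}-free orientations of G equals 2^{|V_1||V_2|}·(2·2^{|V_1|} + 2·2^{|V_2|} - 4). -/

import Mathlib

def IsOrientation {V : Type*} (G : SimpleGraph V) (D : V → V → Prop) : Prop :=
  ∀ u v : V, (G.Adj u v ↔ (D u v ∨ D v u)) ∧ ¬(D u v ∧ D v u)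

def DigraphContains {W V : Type*} (H : W → W → Prop) (D : V → V → Prop) : Prop :=
  ∃ f : W → V, Function.Injective f ∧ ∀ a b : W, H a b → D (f a) (f b)

noncomputable def numFreeOrientations {V W : Type*} (G : SimpleGraph V) (H : W → W → Prop) : ℕ :=
  Nat.card {D : V → V → Prop // IsOrientation G D ∧ ¬ DigraphContains H D}

def partOf {a b : ℕ} : Fin 1 ⊕ (Fin a ⊕ Fin b) → Fin 3
  | Sum.inl _ => 0
  | Sum.inr (Sum.inl _) => 1
  | Sum.inr (Sum.inr _) => 2

/-- The graph consisting of a vertex `v` joined to all vertices of the complete bipartite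
graph with parts of sizes `a` and `b` (the complete tripartite graph `K_{1,a,b}`). -/
def coneBipartite (a b : ℕ) : SimpleGraph (Fin 1 ⊕ (Fin a ⊕ Fin b)) where
  Adj x y := partOf x ≠ partOf y
  symm := ⟨fun _ _ h => h.symm⟩
  loopless := ⟨fun _ h => h rfl⟩

/-- The orientation of the bowtie (triangles `{0,1,2}` and `{0,3,4}` sharing the center `0`)
in which one triangle has both non-shared edges entering the center and the other triangle
has both non-shared edges exiting the center. -/
def bowtieInOut : Fin 5 → Fin 5 → Prop := fun x y =>
  (x, y) ∈ ({(1,0), (2,0), (1,2), (0,3), (0,4), (3,4)} : Set (Fin 5 × Fin 5))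

/-!
Every triangle of `K_{1,a,b}` meets all three parts, so it passes through the apex `v`. In a
copy of the bowtie the two triangles share only their center, which is therefore `v`; the
"in" triangle then supplies an edge into `v` from each of `V₁`, `V₂`, and the "out" triangle
an edge out of `v` to each of them. Conversely, such four edges, together with the two
`V₁`–`V₂` edges joining their endpoints (oriented either way), form a bowtie. So an orientation
is bowtie-free iff the edges between `v` and `V₁`, or those between `v` and `V₂`, all point the
same way. Recording an orientation by one bit per edge, this is a condition on the
`a + b` bits at `v` only, and inclusion–exclusion gives the count.
-/

namespace IsOrientation

variable {V : Type*} {G : SimpleGraph V} {D : V → V → Prop}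

theorem adj (hD : IsOrientation G D) {u w : V} (h : D u w) : G.Adj u w :=
  (hD u w).1.2 (.inl h)

theorem asymm (hD : IsOrientation G D) {u w : V} (h : D u w) : ¬ D w u :=
  fun h' => (hD u w).2 ⟨h, h'⟩

theorem irrefl (hD : IsOrientation G D) (u : V) : ¬ D u u :=
  fun h => G.loopless.irrefl u (hD.adj h)

theorem rel_or_rel (hD : IsOrientation G D) {u w : V} (h : G.Adj u w) : D u w ∨ D w u :=
  (hD u w).1.1 h

theorem rel_iff_not_rel (hD : IsOrientation G D) {u w : V} (h : G.Adj u w) :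
    D u w ↔ ¬ D w u :=
  ⟨hD.asymm, (hD.rel_or_rel h).resolve_right⟩

theorem ne_of_rel_of_rel (hD : IsOrientation G D) {u w z : V} (h₁ : D u w) (h₂ : D w z) :
    u ≠ z := by
  rintro rfl
  exact hD.asymm h₁ h₂

theorem digraphContains_bowtieInOut (hD : IsOrientation G D) {c p q r s : V}
    (hpc : D p c) (hqc : D q c) (hpq : D p q) (hcr : D c r) (hcs : D c s) (hrs : D r s) :
    DigraphContains bowtieInOut D := by
  -- the five vertices are distinct because `D` is irreflexive and asymmetric
  have := hD.irrefl
  have hpr := hD.ne_of_rel_of_rel hpc hcr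
  have hps := hD.ne_of_rel_of_rel hpc hcs
  have hqr := hD.ne_of_rel_of_rel hqc hcr
  have hqs := hD.ne_of_rel_of_rel hqc hcs
  refine ⟨![c, p, q, r, s], ?_, ?_⟩
  · intro i j h
    fin_cases i <;> fin_cases j <;> first | rfl | (exfalso; simp_all [eq_comm])
  · intro i j h
    simp only [bowtieInOut, Set.mem_insert_iff, Set.mem_singleton_iff, Prod.mk.injEq] at h
    rcases h with ⟨rfl, rfl⟩ | ⟨rfl, rfl⟩ | ⟨rfl, rfl⟩ | ⟨rfl, rfl⟩ | ⟨rfl, rfl⟩ | ⟨rfl, rfl⟩ <;>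
      assumption

end IsOrientation

section OrientationEquiv

variable {V E : Type*} {G : SimpleGraph V} {e : E → V × V}

abbrev Orientations (G : SimpleGraph V) := {D // IsOrientation G D}

/- In the intended use `e` lists every edge of `G` exactly once, in one of its two directions,
and `f i` says whether the edge `e i` keeps that direction or is reversed. -/
def orientAlong (e : E → V × V) (f : E → Prop) (u w : V) : Prop :=
  ∃ i, e i = (u, w) ∧ f i ∨ e i = (w, u) ∧ ¬ f i

theorem adj_of_eq_or_eq_swap (hadj : ∀ i, G.Adj (e i).1 (e i).2) {i : E} {u w : V}
    (h : e i = (u, w) ∨ e i = (w, u)) : G.Adj u w := by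
  rcases h with h | h <;> simpa [h, G.adj_comm] using hadj i

theorem isOrientation_orientAlong (hadj : ∀ i, G.Adj (e i).1 (e i).2)
    (hunique : ∀ u w, G.Adj u w → ∃! i, e i = (u, w) ∨ e i = (w, u)) (f : E → Prop) :
    IsOrientation G (orientAlong e f) := by
  intro u w
  refine ⟨⟨fun h => ?_, ?_⟩, ?_⟩
  · obtain ⟨i, hi | hi, -⟩ := hunique u w h <;> by_cases hf : f i
    exacts [.inl ⟨i, .inl ⟨hi, hf⟩⟩, .inr ⟨i, .inr ⟨hi, hf⟩⟩,
      .inr ⟨i, .inl ⟨hi, hf⟩⟩, .inl ⟨i, .inr ⟨hi, hf⟩⟩]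
  · rintro (⟨i, hi⟩ | ⟨i, hi⟩)
    · exact adj_of_eq_or_eq_swap hadj (by tauto)
    · exact (adj_of_eq_or_eq_swap hadj (by tauto)).symm
  · rintro ⟨⟨i, hi⟩, ⟨j, hj⟩⟩
    have hG : G.Adj u w := adj_of_eq_or_eq_swap hadj (i := i) (by tauto)
    obtain rfl : i = j := (hunique u w hG).unique (by tauto) (by tauto)
    have hne := G.ne_of_adj hG
    rcases hi with ⟨hi, hf⟩ | ⟨hi, hf⟩ <;> rcases hj with ⟨hj, hf'⟩ | ⟨hj, hf'⟩ <;>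
      first | exact hf' hf | exact hf hf' | (rw [hi, Prod.mk.injEq] at hj; grind)

def orientationEquiv (hadj : ∀ i, G.Adj (e i).1 (e i).2)
    (hunique : ∀ u w, G.Adj u w → ∃! i, e i = (u, w) ∨ e i = (w, u)) :
    Orientations G ≃ (E → Prop) where
  toFun D i := D.1 (e i).1 (e i).2
  invFun f := ⟨orientAlong e f, isOrientation_orientAlong hadj hunique f⟩
  left_inv := by
    rintro ⟨D, hD⟩
    ext u w
    dsimp only
    refine ⟨?_, fun h => ?_⟩
    · rintro ⟨i, ⟨hi, h⟩ | ⟨hi, h⟩⟩ <;> simp only [hi] at h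
      · exact h
      · exact (hD.rel_iff_not_rel (adj_of_eq_or_eq_swap hadj (.inr hi))).2 h
    · obtain ⟨i, hi | hi, -⟩ := hunique u w (hD.adj h)
      · exact ⟨i, .inl ⟨hi, by simpa only [hi]⟩⟩
      · exact ⟨i, .inr ⟨hi, by simpa only [hi] using hD.asymm h⟩⟩
  right_inv f := by
    funext i
    apply propext
    change orientAlong e f (e i).1 (e i).2 ↔ f i
    have hne := G.ne_of_adj (hadj i)
    refine ⟨?_, fun h => ⟨i, .inl ⟨rfl, h⟩⟩⟩
    rintro ⟨j, hj⟩
    obtain rfl : j = i := (hunique _ _ (hadj i)).unique (by tauto) (.inl rfl)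
    rcases hj with ⟨-, hf⟩ | ⟨hj, -⟩
    · exact hf
    · rw [Prod.ext_iff] at hj
      exact absurd hj.1 hne

end OrientationEquiv

section Counting

variable {α β X Y : Type*}

theorem card_constant_fun [Nonempty α] [Nonempty β] :
    Nat.card {f : α → β // ∀ x y, f x = f y} = Nat.card β := by
  rw [← Nat.card_range_of_injective (Function.const_injective (α := α) (β := β)),
    Set.range_const_eq_diagonal]
  rfl

theorem card_prod_or_add [Finite X] [Finite Y] (s : Set X) (t : Set Y) :
    Nat.card {p : X × Y // p.1 ∈ s ∨ p.2 ∈ t} + Nat.card s * Nat.card t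
      = Nat.card s * Nat.card Y + Nat.card X * Nat.card t := by
  have hunion : {p : X × Y | p.1 ∈ s ∨ p.2 ∈ t} = s ×ˢ Set.univ ∪ Set.univ ×ˢ t := by
    ext; simp
  have h := Set.ncard_union_add_ncard_inter (s ×ˢ Set.univ) (Set.univ ×ˢ t)
  rwa [Set.prod_inter_prod, Set.inter_univ, Set.univ_inter, Set.ncard_prod, Set.ncard_prod,
    Set.ncard_prod, Set.ncard_univ, Set.ncard_univ, ← hunion] at h

end Counting

namespace coneBipartite

variable {a b : ℕ} {u w z : Fin 1 ⊕ (Fin a ⊕ Fin b)}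

def center : Fin 1 ⊕ (Fin a ⊕ Fin b) := .inl 0

theorem adj_iff : (coneBipartite a b).Adj u w ↔ partOf u ≠ partOf w := Iff.rfl

theorem partOf_eq_zero_iff : partOf u = 0 ↔ u = center := by
  rcases u with u | x | y <;> simp [partOf, center, Fin.fin_one_eq_zero]

theorem eq_center_of_triangle (huw : (coneBipartite a b).Adj u w)
    (hwz : (coneBipartite a b).Adj w z) (huz : (coneBipartite a b).Adj u z) :
    u = center ∨ w = center ∨ z = center := by
  have key : ∀ p q r : Fin 3, p ≠ q → q ≠ r → p ≠ r → p = 0 ∨ q = 0 ∨ r = 0 := by decide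
  simpa only [partOf_eq_zero_iff] using key _ _ _ huw hwz huz

theorem exists_partOf_eq_one_and_two {R : Fin 1 ⊕ (Fin a ⊕ Fin b) → Prop}
    (huw : (coneBipartite a b).Adj u w) (hu : u ≠ center) (hw : w ≠ center) (hRu : R u)
    (hRw : R w) : (∃ x, partOf x = 1 ∧ R x) ∧ (∃ x, partOf x = 2 ∧ R x) := by
  have key : ∀ p q : Fin 3, p ≠ q → p ≠ 0 → q ≠ 0 → p = 1 ∧ q = 2 ∨ p = 2 ∧ q = 1 := by
    decide
  rw [Ne, ← partOf_eq_zero_iff] at hu hw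
  rcases key _ _ huw hu hw with ⟨hu, hw⟩ | ⟨hu, hw⟩
  exacts [⟨⟨u, hu, hRu⟩, ⟨w, hw, hRw⟩⟩, ⟨⟨w, hw, hRw⟩, ⟨u, hu, hRu⟩⟩]

def IsMixed (D : (Fin 1 ⊕ (Fin a ⊕ Fin b)) → (Fin 1 ⊕ (Fin a ⊕ Fin b)) → Prop) (i : Fin 3) :
    Prop :=
  (∃ x, partOf x = i ∧ D x center) ∧ (∃ y, partOf y = i ∧ D center y)

variable {D : (Fin 1 ⊕ (Fin a ⊕ Fin b)) → (Fin 1 ⊕ (Fin a ⊕ Fin b)) → Prop}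

theorem digraphContains_bowtieInOut_iff (hD : IsOrientation (coneBipartite a b) D) :
    DigraphContains bowtieInOut D ↔ IsMixed D 1 ∧ IsMixed D 2 := by
  constructor
  · rintro ⟨f, hinj, hf⟩
    have h10 := hf 1 0 (by simp [bowtieInOut])
    have h20 := hf 2 0 (by simp [bowtieInOut])
    have h12 := hf 1 2 (by simp [bowtieInOut])
    have h03 := hf 0 3 (by simp [bowtieInOut])
    have h04 := hf 0 4 (by simp [bowtieInOut])
    have h34 := hf 3 4 (by simp [bowtieInOut])
    have hf0 : f 0 = center := by
      by_contra h0
      have h₁ := eq_center_of_triangle (hD.adj h10).symm (hD.adj h12) (hD.adj h20).symm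
      have h₂ := eq_center_of_triangle (hD.adj h03) (hD.adj h34) (hD.adj h04)
      rcases h₁.resolve_left h0 with h | h <;> rcases h₂.resolve_left h0 with h' | h' <;>
        exact absurd (hinj (h.trans h'.symm)) (by decide)
    have hne : ∀ i, i ≠ 0 → f i ≠ center := fun i hi h => hi (hinj (h.trans hf0.symm))
    rw [hf0] at h10 h20 h03 h04
    obtain ⟨⟨x₁, hx₁, hx₁c⟩, ⟨x₂, hx₂, hx₂c⟩⟩ := exists_partOf_eq_one_and_two (R := (D · center))
      (hD.adj h12) (hne 1 (by decide)) (hne 2 (by decide)) h10 h20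
    obtain ⟨⟨y₁, hy₁, hy₁c⟩, ⟨y₂, hy₂, hy₂c⟩⟩ := exists_partOf_eq_one_and_two (R := (D center ·))
      (hD.adj h34) (hne 3 (by decide)) (hne 4 (by decide)) h03 h04
    exact ⟨⟨⟨x₁, hx₁, hx₁c⟩, ⟨y₁, hy₁, hy₁c⟩⟩, ⟨⟨x₂, hx₂, hx₂c⟩, ⟨y₂, hy₂, hy₂c⟩⟩⟩
  · rintro ⟨⟨⟨x₁, hx₁, hx₁c⟩, ⟨y₁, hy₁, hy₁c⟩⟩, ⟨⟨x₂, hx₂, hx₂c⟩, ⟨y₂, hy₂, hy₂c⟩⟩⟩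
    have hx : (coneBipartite a b).Adj x₁ x₂ := by rw [adj_iff, hx₁, hx₂]; decide
    have hy : (coneBipartite a b).Adj y₁ y₂ := by rw [adj_iff, hy₁, hy₂]; decide
    rcases hD.rel_or_rel hx with hx | hx <;> rcases hD.rel_or_rel hy with hy | hy
    exacts [hD.digraphContains_bowtieInOut hx₁c hx₂c hx hy₁c hy₂c hy,
      hD.digraphContains_bowtieInOut hx₁c hx₂c hx hy₂c hy₁c hy,
      hD.digraphContains_bowtieInOut hx₂c hx₁c hx hy₁c hy₂c hy,
      hD.digraphContains_bowtieInOut hx₂c hx₁c hx hy₂c hy₁c hy]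

theorem not_isMixed_iff (hD : IsOrientation (coneBipartite a b) D) {i : Fin 3} (hi : i ≠ 0) :
    ¬ IsMixed D i ↔ ∀ x y, partOf x = i → partOf y = i → (D center x ↔ D center y) := by
  have hrel : ∀ x, partOf x = i → (D x center ↔ ¬ D center x) := fun x hx =>
    hD.rel_iff_not_rel (by rw [adj_iff, hx]; exact hi)
  simp only [IsMixed, not_and, not_exists, forall_exists_index, and_imp]
  constructor
  · intro h x y hx hy
    have hxy := fun hx' hy' => h x hx ((hrel x hx).2 hx') y hy hy'
    have hyx := fun hy' hx' => h y hy ((hrel y hy).2 hy') x hx hx'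
    tauto
  · intro h x hx hxc y hy hyc
    exact (hrel x hx).1 hxc ((h x y hx hy).2 hyc)

def edge : (Fin a ⊕ Fin b) ⊕ (Fin a × Fin b) → (Fin 1 ⊕ (Fin a ⊕ Fin b)) × (Fin 1 ⊕ (Fin a ⊕ Fin b))
  | .inl (.inl x) => (center, .inr (.inl x))
  | .inl (.inr y) => (center, .inr (.inr y))
  | .inr (x, y) => (.inr (.inl x), .inr (.inr y))

theorem adj_edge (i : (Fin a ⊕ Fin b) ⊕ (Fin a × Fin b)) :
    (coneBipartite a b).Adj (edge i).1 (edge i).2 := by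
  rcases i with (x | y) | ⟨x, y⟩ <;> simp [adj_iff, edge, center, partOf]

theorem edge_injective : Function.Injective (edge (a := a) (b := b)) := by
  rintro ((x | y) | ⟨x, y⟩) ((x' | y') | ⟨x', y'⟩) <;> simp [edge, center]

theorem edge_ne_swap (i j : (Fin a ⊕ Fin b) ⊕ (Fin a × Fin b)) : edge i ≠ (edge j).swap := by
  rcases i with (x | y) | ⟨x, y⟩ <;> rcases j with (x' | y') | ⟨x', y'⟩ <;> simp [edge, center]

theorem existsUnique_edge (u w : Fin 1 ⊕ (Fin a ⊕ Fin b)) (h : (coneBipartite a b).Adj u w) :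
    ∃! i, edge i = (u, w) ∨ edge i = (w, u) := by
  refine existsUnique_of_exists_of_unique ?_ ?_
  · rcases u with u | x | y <;> rcases w with w | x' | y' <;>
      first
      | exact absurd rfl h
      | simp [Sum.exists, edge, center, Fin.fin_one_eq_zero]
  · rintro i j (hi | hi) (hj | hj)
    all_goals first
      | exact edge_injective (hi.trans hj.symm)
      | exact absurd (by rw [hi, hj]; rfl) (edge_ne_swap i j)

def orientationEquivProd :
    Orientations (coneBipartite a b) ≃ ((Fin a → Prop) × (Fin b → Prop)) × (Fin a × Fin b → Prop) :=
  (orientationEquiv adj_edge existsUnique_edge).trans <|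
    (Equiv.sumArrowEquivProdArrow _ _ _).trans <|
      (Equiv.sumArrowEquivProdArrow _ _ _).prodCongr (Equiv.refl _)

theorem not_digraphContains_bowtieInOut_iff (D : Orientations (coneBipartite a b)) :
    ¬ DigraphContains bowtieInOut D.1 ↔
      (∀ x y, (orientationEquivProd D).1.1 x = (orientationEquivProd D).1.1 y) ∨
      (∀ x y, (orientationEquivProd D).1.2 x = (orientationEquivProd D).1.2 y) := by
  rw [digraphContains_bowtieInOut_iff D.2, not_and_or,
    not_isMixed_iff D.2 (by decide : (1 : Fin 3) ≠ 0),
    not_isMixed_iff D.2 (by decide : (2 : Fin 3) ≠ 0)]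
  simp [Sum.forall, partOf, orientationEquivProd, orientationEquiv, edge]

theorem numFreeOrientations_bowtieInOut (ha : 0 < a) (hb : 0 < b) :
    numFreeOrientations (coneBipartite a b) bowtieInOut
      = 2 ^ (a * b) * (2 * 2 ^ a + 2 * 2 ^ b - 4) := by
  have : Nonempty (Fin a) := ⟨⟨0, ha⟩⟩
  have : Nonempty (Fin b) := ⟨⟨0, hb⟩⟩
  let S₁ : Set (Fin a → Prop) := {f | ∀ x y, f x = f y}
  let S₂ : Set (Fin b → Prop) := {f | ∀ x y, f x = f y}
  have hfree : numFreeOrientations (coneBipartite a b) bowtieInOut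
      = Nat.card {g : ((Fin a → Prop) × (Fin b → Prop)) × (Fin a × Fin b → Prop) //
          g.1.1 ∈ S₁ ∨ g.1.2 ∈ S₂} :=
    Nat.card_congr <| (Equiv.subtypeSubtypeEquivSubtypeInter _ _).symm.trans <|
      orientationEquivProd.subtypeEquiv not_digraphContains_bowtieInOut_iff
  have hprop : Nat.card Prop = 2 := by rw [Nat.card_eq_fintype_card, Fintype.card_prop]
  have hcount := card_prod_or_add S₁ S₂
  have hS₁ : Nat.card S₁ = 2 := card_constant_fun.trans hprop
  have hS₂ : Nat.card S₂ = 2 := card_constant_fun.trans hprop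
  rw [hS₁, hS₂] at hcount
  rw [hfree, Nat.card_congr (Equiv.prodSubtypeFstEquivSubtypeProd
      (p := fun g : (Fin a → Prop) × (Fin b → Prop) => g.1 ∈ S₁ ∨ g.2 ∈ S₂)), Nat.card_prod]
  simp only [Nat.card_fun, Nat.card_prod, Nat.card_fin, hprop] at hcount ⊢
  rw [mul_comm]
  congr 1
  omega

end coneBipartite

/-- For `n ≥ 3`, the number of `B⃗`-free orientations of the cone over
`K_{⌊(n-1)/2⌋, ⌈(n-1)/2⌉}` equals `2^{|V₁||V₂|}·(2·2^{|V₁|} + 2·2^{|V₂|} - 4)`. -/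
theorem stmt8 (n a b : ℕ) (hn : 3 ≤ n) (ha : a = (n - 1) / 2) (hb : b = (n - 1) - (n - 1) / 2) :
    numFreeOrientations (coneBipartite a b) bowtieInOut
      = 2 ^ (a * b) * (2 * 2 ^ a + 2 * 2 ^ b - 4) :=
  coneBipartite.numFreeOrientations_bowtieInOut (by omega) (by omega)
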